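/- arXiv:1301.5874 — 3 statements merged into one kernel-verified Lean document; each statement's English description precedes it below -/
import Mathlib

section
/- Let σ > 0, λ > 0, let x0 : ℕ → ℝ be a fixed real sequence, let (W_i)_{i∈ℕ} be i.i.d. centered Gaussian random variables of variance σ², and set Y_i = x0_i + W_i. Let h : ℕ → (0,∞) satisfy h(P) → 0 and 1/(P·h(P)) → 0 as P → ∞. Then Var[(1/P)·EDOF_HT((Y_1,…,Y_P), λ, h(P))] → 0 as P → ∞. -/
/-!
`EDOF` is a sum of the per-coordinate terms
`1{|Yᵢ| > λ} + C(h) (e^{-(Yᵢ+λ)²/2h²} + e^{-(Yᵢ-λ)²/2h²})`. These are independent, so the variance of their average is `1/P²` times the sum of their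
variances, each bounded by the second moment. Indicator and bumps lie in `[0, 1]`, so that moment
is at most `2 + 4 C(h)² 𝔼[bumps]`; bounding the `N(x0ᵢ, σ²)` density by `1/(σ√(2π))`, a bump of
width `h` has expectation at most `h/σ`. Since `C(h)² h = O((σ² + h²)/h)`, the variance is
`O(1/P + (σ² + h²)/(P h)) → 0`.
-/

open MeasureTheory ProbabilityTheory Filter Real

/-- Scalar hard thresholding at threshold `lam`. -/
noncomputable def HT (lam y : ℝ) : ℝ := if |y| < lam then 0 else y

/-- The DOF estimator `EDOF_HT(y, λ, h)` for hard thresholding. -/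
noncomputable def EDOF (σ lam h : ℝ) (P : ℕ) (y : ℕ → ℝ) : ℝ :=
  (∑ i ∈ Finset.range P, if lam < |y i| then (1 : ℝ) else 0) +
    lam * Real.sqrt (σ ^ 2 + h ^ 2) / (Real.sqrt (2 * π) * σ * h) *
      ∑ i ∈ Finset.range P,
        (Real.exp (-(y i + lam) ^ 2 / (2 * h ^ 2)) +
          Real.exp (-(y i - lam) ^ 2 / (2 * h ^ 2)))

/-- Covariance of two real random variables. -/
noncomputable def cov {Ω : Type*} [MeasurableSpace Ω] (μ : Measure Ω) (X Y : Ω → ℝ) : ℝ :=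
  ∫ ω, (X ω - ∫ x, X x ∂μ) * (Y ω - ∫ x, Y x ∂μ) ∂μ

/-- The degrees of freedom of hard thresholding:
`DOF_HT(x0, λ) = ∑ i Cov(Y i, HT(Y i, λ)) / σ²` where `Y` is the (random) observation. -/
noncomputable def DOF {Ω : Type*} [MeasurableSpace Ω] (μ : Measure Ω) (σ lam : ℝ) (P : ℕ)
    (Y : ℕ → Ω → ℝ) : ℝ :=
  ∑ i ∈ Finset.range P, cov μ (Y i) (fun ω => HT lam (Y i ω)) / σ ^ 2

open scoped NNReal

lemma gaussianPDFReal_le_inv_sqrt (μ : ℝ) (v : ℝ≥0) (x : ℝ) :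
    gaussianPDFReal μ v x ≤ (√(2 * π * v))⁻¹ := by
  refine mul_le_of_le_one_right (by positivity) (exp_le_one_iff.mpr ?_)
  exact div_nonpos_of_nonpos_of_nonneg (neg_nonpos.mpr (sq_nonneg _)) (by positivity)

lemma integral_gaussianReal_le_of_nonneg {μ : ℝ} {v : ℝ≥0} (hv : v ≠ 0) {f : ℝ → ℝ}
    (hf : 0 ≤ f) (hfi : Integrable f) :
    ∫ x, f x ∂gaussianReal μ v ≤ (√(2 * π * v))⁻¹ * ∫ x, f x := by
  rw [integral_gaussianReal_eq_integral_smul hv, ← integral_const_mul]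
  refine integral_mono_of_nonneg (ae_of_all _ fun x => ?_) (hfi.const_mul _)
    (ae_of_all _ fun x => ?_)
  · exact smul_nonneg (gaussianPDFReal_nonneg μ v x) (hf x)
  · exact mul_le_mul_of_nonneg_right (gaussianPDFReal_le_inv_sqrt μ v x) (hf x)

lemma integral_exp_neg_sq_div_gaussianReal_le (μ m : ℝ) {v : ℝ≥0} (hv : v ≠ 0) {s : ℝ}
    (hs : 0 < s) :
    ∫ x, exp (-(x - m) ^ 2 / (2 * s ^ 2)) ∂gaussianReal μ v ≤ s / √v := by
  set w : ℝ≥0 := ⟨s ^ 2, sq_nonneg s⟩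
  have hw : w ≠ 0 := fun h => (pow_pos hs 2).ne' (congrArg NNReal.toReal h)
  have hsqrt : ∀ u : ℝ≥0, √(2 * π * u) = √(2 * π) * √u := fun u =>
    Real.sqrt_mul (by positivity) u
  have hkernel : (fun x => exp (-(x - m) ^ 2 / (2 * s ^ 2))) =
      fun x => √(2 * π * w) * gaussianPDFReal m w x := by
    ext x
    rw [gaussianPDFReal, ← mul_assoc, mul_inv_cancel₀ (by positivity), one_mul]
    rfl
  have hkernel_integral : ∫ x, √(2 * π * w) * gaussianPDFReal m w x = √(2 * π * w) := by
    rw [integral_const_mul, integral_gaussianPDFReal_eq_one m hw, mul_one]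
  rw [hkernel]
  refine (integral_gaussianReal_le_of_nonneg hv
    (fun x => mul_nonneg (Real.sqrt_nonneg _) (gaussianPDFReal_nonneg m w x))
    ((integrable_gaussianPDFReal m w).const_mul _)).trans (le_of_eq ?_)
  rw [hkernel_integral, hsqrt, hsqrt, show √(w : ℝ) = s from Real.sqrt_sq hs.le]
  field_simp

noncomputable def edofCoeff (σ lam h : ℝ) : ℝ :=
  lam * √(σ ^ 2 + h ^ 2) / (√(2 * π) * σ * h)

noncomputable def edofTerm (σ lam h y : ℝ) : ℝ :=
  (if lam < |y| then 1 else 0) +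
    edofCoeff σ lam h * (exp (-(y + lam) ^ 2 / (2 * h ^ 2)) + exp (-(y - lam) ^ 2 / (2 * h ^ 2)))

lemma EDOF_eq_sum_edofTerm (σ lam h : ℝ) (P : ℕ) (y : ℕ → ℝ) :
    EDOF σ lam h P y = ∑ i ∈ Finset.range P, edofTerm σ lam h (y i) := by
  rw [EDOF, Finset.mul_sum, ← Finset.sum_add_distrib]
  rfl

lemma edofCoeff_nonneg {σ lam h : ℝ} (hσ : 0 ≤ σ) (hlam : 0 ≤ lam) (hh : 0 ≤ h) :
    0 ≤ edofCoeff σ lam h := by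
  unfold edofCoeff
  positivity

lemma edofCoeff_sq_mul_div {σ lam h : ℝ} (hσ : 0 < σ) (hh : 0 < h) :
    edofCoeff σ lam h ^ 2 * h / σ = lam ^ 2 / (2 * π * σ ^ 3) * ((σ ^ 2 + h ^ 2) / h) := by
  rw [edofCoeff, div_pow, mul_pow, mul_pow, mul_pow, Real.sq_sqrt (by positivity),
    Real.sq_sqrt (by positivity)]
  field_simp

lemma measurable_edofTerm (σ lam h : ℝ) : Measurable (edofTerm σ lam h) := by
  unfold edofTerm
  refine Measurable.add ?_ (by fun_prop)
  exact Measurable.ite (measurableSet_lt measurable_const measurable_id.abs)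
    measurable_const measurable_const

lemma exp_neg_sq_div_mem_Icc (q r : ℝ) (hr : 0 ≤ r) : exp (-q ^ 2 / r) ∈ Set.Icc 0 1 :=
  ⟨(exp_pos _).le,
    exp_le_one_iff.mpr (div_nonpos_of_nonpos_of_nonneg (neg_nonpos.mpr (sq_nonneg q)) hr)⟩

section
variable {σ lam h : ℝ} (hσ : 0 ≤ σ) (hlam : 0 ≤ lam) (hh : 0 ≤ h)
include hσ hlam hh

lemma abs_edofTerm_le (y : ℝ) : |edofTerm σ lam h y| ≤ 1 + 2 * edofCoeff σ lam h := by
  have hC := edofCoeff_nonneg hσ hlam hh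
  obtain ⟨hu0, hu1⟩ := exp_neg_sq_div_mem_Icc (y + lam) (2 * h ^ 2) (by positivity)
  obtain ⟨hv0, hv1⟩ := exp_neg_sq_div_mem_Icc (y - lam) (2 * h ^ 2) (by positivity)
  unfold edofTerm
  rw [abs_le]
  constructor <;> split_ifs <;> nlinarith

lemma edofTerm_sq_le (y : ℝ) :
    edofTerm σ lam h y ^ 2 ≤ 2 + 4 * edofCoeff σ lam h ^ 2 *
      (exp (-(y + lam) ^ 2 / (2 * h ^ 2)) + exp (-(y - lam) ^ 2 / (2 * h ^ 2))) := by
  have hC := edofCoeff_nonneg hσ hlam hh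
  obtain ⟨hu0, hu1⟩ := exp_neg_sq_div_mem_Icc (y + lam) (2 * h ^ 2) (by positivity)
  obtain ⟨hv0, hv1⟩ := exp_neg_sq_div_mem_Icc (y - lam) (2 * h ^ 2) (by positivity)
  set C := edofCoeff σ lam h
  set u := exp (-(y + lam) ^ 2 / (2 * h ^ 2))
  set v := exp (-(y - lam) ^ 2 / (2 * h ^ 2))
  set a : ℝ := if lam < |y| then 1 else 0
  have ha : a ^ 2 ≤ 1 := by simp only [a]; split_ifs <;> norm_num
  -- `(a + b) ^ 2 ≤ 2 a ^ 2 + 2 b ^ 2`, and `(u + v) ^ 2 ≤ 2 (u + v)` since `u, v ∈ [0, 1]`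
  have huv : (u + v) ^ 2 ≤ 2 * (u + v) := by nlinarith
  calc (a + C * (u + v)) ^ 2 ≤ 2 * a ^ 2 + 2 * C ^ 2 * (u + v) ^ 2 := by
        nlinarith [sq_nonneg (a - C * (u + v))]
    _ ≤ 2 + 4 * C ^ 2 * (u + v) := by nlinarith [sq_nonneg C]

end

lemma integral_edofTerm_sq_gaussianReal_le {σ lam h : ℝ} (hσ : 0 ≤ σ) (hlam : 0 ≤ lam)
    (hh : 0 < h) (μ : ℝ) {v : ℝ≥0} (hv : v ≠ 0) :
    ∫ y, edofTerm σ lam h y ^ 2 ∂gaussianReal μ v ≤ 2 + 8 * edofCoeff σ lam h ^ 2 * h / √v := by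
  set C := edofCoeff σ lam h
  have hbump_int : ∀ c : ℝ, Integrable (fun y => exp (-(y + c) ^ 2 / (2 * h ^ 2)))
      (gaussianReal μ v) := fun c =>
    (integrable_const (1 : ℝ)).mono' (by fun_prop) (ae_of_all _ fun y => by
      rw [Real.norm_of_nonneg (exp_pos _).le]
      exact (exp_neg_sq_div_mem_Icc _ _ (by positivity)).2)
  have hbump_le : ∀ c : ℝ, ∫ y, exp (-(y + c) ^ 2 / (2 * h ^ 2)) ∂gaussianReal μ v ≤ h / √v :=
    fun c => by
      simpa only [sub_neg_eq_add] using integral_exp_neg_sq_div_gaussianReal_le μ (-c) hv hh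
  have hsum_int : Integrable (fun y => 4 * C ^ 2 *
      (exp (-(y + lam) ^ 2 / (2 * h ^ 2)) + exp (-(y + -lam) ^ 2 / (2 * h ^ 2))))
      (gaussianReal μ v) :=
    ((hbump_int lam).fun_add (hbump_int (-lam))).const_mul _
  calc ∫ y, edofTerm σ lam h y ^ 2 ∂gaussianReal μ v
      ≤ ∫ y, 2 + 4 * C ^ 2 *
          (exp (-(y + lam) ^ 2 / (2 * h ^ 2)) + exp (-(y + -lam) ^ 2 / (2 * h ^ 2)))
          ∂gaussianReal μ v := by
        refine integral_mono_of_nonneg (ae_of_all _ fun y => sq_nonneg _)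
          ((integrable_const _).fun_add hsum_int)
          (ae_of_all _ fun y => ?_)
        simpa only [← sub_eq_add_neg] using edofTerm_sq_le hσ hlam hh.le y
    _ = 2 + 4 * C ^ 2 * (∫ y, exp (-(y + lam) ^ 2 / (2 * h ^ 2)) ∂gaussianReal μ v +
          ∫ y, exp (-(y + -lam) ^ 2 / (2 * h ^ 2)) ∂gaussianReal μ v) := by
        rw [integral_add (integrable_const _) hsum_int, integral_const_mul,
          integral_add (hbump_int _) (hbump_int _), integral_const, probReal_univ, one_smul]
    _ ≤ 2 + 4 * C ^ 2 * (h / √v + h / √v) := by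
        gcongr
        exacts [hbump_le lam, hbump_le (-lam)]
    _ = 2 + 8 * C ^ 2 * h / √v := by ring

lemma variance_edofTerm_le {Ω : Type*} [MeasurableSpace Ω] {μ : Measure Ω}
    [IsProbabilityMeasure μ] {σ lam h : ℝ} (hσ : 0 ≤ σ) (hlam : 0 ≤ lam) (hh : 0 < h)
    {X : Ω → ℝ} (hX : Measurable X) {m : ℝ} {v : ℝ≥0} (hv : v ≠ 0)
    (hlaw : μ.map X = gaussianReal m v) :
    Var[fun ω => edofTerm σ lam h (X ω); μ] ≤ 2 + 8 * edofCoeff σ lam h ^ 2 * h / √v := by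
  have hf := measurable_edofTerm σ lam h
  calc Var[fun ω => edofTerm σ lam h (X ω); μ]
      ≤ μ[(fun ω => edofTerm σ lam h (X ω)) ^ 2] :=
        variance_le_expectation_sq (X := fun ω => edofTerm σ lam h (X ω))
          (hf.comp hX).aestronglyMeasurable
    _ = ∫ y, edofTerm σ lam h y ^ 2 ∂gaussianReal m v := by
        rw [← hlaw, integral_map hX.aemeasurable (hf.pow_const 2).aestronglyMeasurable]
        rfl
    _ ≤ 2 + 8 * edofCoeff σ lam h ^ 2 * h / √v :=
        integral_edofTerm_sq_gaussianReal_le hσ hlam hh m hv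

lemma variance_div_EDOF_le {Ω : Type*} [MeasurableSpace Ω] {μ : Measure Ω}
    [IsProbabilityMeasure μ] {σ lam h : ℝ} (hσ : 0 < σ) (hlam : 0 ≤ lam) (hh : 0 < h)
    (x0 : ℕ → ℝ) {W : ℕ → Ω → ℝ} (hmeas : ∀ i, Measurable (W i)) (hindep : iIndepFun W μ)
    (hdist : ∀ i, μ.map (W i) = gaussianReal 0 ⟨σ ^ 2, sq_nonneg σ⟩) (P : ℕ) :
    Var[fun ω => (1 / (P : ℝ)) * EDOF σ lam h P (fun i => x0 i + W i ω); μ] ≤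
      (2 + 8 * edofCoeff σ lam h ^ 2 * h / σ) / P := by
  set D := 2 + 8 * edofCoeff σ lam h ^ 2 * h / σ
  set v : ℝ≥0 := ⟨σ ^ 2, sq_nonneg σ⟩
  have hv : v ≠ 0 := fun hv => (pow_pos hσ 2).ne' (congrArg NNReal.toReal hv)
  set Z : ℕ → Ω → ℝ := fun i ω => edofTerm σ lam h (x0 i + W i ω)
  have hZ_meas : ∀ i, Measurable (Z i) := fun i =>
    (measurable_edofTerm σ lam h).comp ((hmeas i).const_add (x0 i))
  have hZ_memLp : ∀ i, MemLp (Z i) 2 μ := fun i =>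
    MemLp.of_bound (hZ_meas i).aestronglyMeasurable _
      (ae_of_all _ fun ω => abs_edofTerm_le hσ.le hlam hh.le _)
  have hZ_var : ∀ i, Var[Z i; μ] ≤ D := fun i => by
    have hlaw : μ.map (fun ω => x0 i + W i ω) = gaussianReal (x0 i) v := by
      rw [show (fun ω => x0 i + W i ω) = (x0 i + ·) ∘ W i from rfl,
        ← Measure.map_map (measurable_const_add (x0 i)) (hmeas i), hdist i,
        gaussianReal_map_const_add, zero_add]
    have := variance_edofTerm_le hσ.le hlam hh ((hmeas i).const_add (x0 i)) hv hlaw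
    rwa [show √(v : ℝ) = σ from Real.sqrt_sq hσ.le] at this
  have hvar_sum : Var[∑ i ∈ Finset.range P, Z i; μ] = ∑ i ∈ Finset.range P, Var[Z i; μ] :=
    IndepFun.variance_sum (fun i _ => hZ_memLp i) fun i _ j _ hij =>
      (hindep.indepFun hij).comp ((measurable_edofTerm σ lam h).comp (measurable_const_add _))
        ((measurable_edofTerm σ lam h).comp (measurable_const_add _))
  have hEDOF : (fun ω => (1 / (P : ℝ)) * EDOF σ lam h P (fun i => x0 i + W i ω)) =
      fun ω => (1 / (P : ℝ)) * (∑ i ∈ Finset.range P, Z i) ω := by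
    ext ω
    rw [EDOF_eq_sum_edofTerm, Finset.sum_apply]
  calc Var[fun ω => (1 / (P : ℝ)) * EDOF σ lam h P (fun i => x0 i + W i ω); μ]
      = (1 / (P : ℝ)) ^ 2 * ∑ i ∈ Finset.range P, Var[Z i; μ] := by
        rw [hEDOF, variance_const_mul, hvar_sum]
    _ ≤ (1 / (P : ℝ)) ^ 2 * (P * D) := by
        gcongr
        simpa using Finset.sum_le_card_nsmul (Finset.range P) _ D fun i _ => hZ_var i
    _ = D / P := by
        rcases eq_or_ne (P : ℝ) 0 with hP | hP
        · simp [hP]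
        · field_simp

lemma tendsto_edof_variance_bound {σ lam : ℝ} (hσ : 0 < σ) {h : ℕ → ℝ} (hpos : ∀ P, 0 < h P)
    (hh0 : Tendsto h atTop (nhds 0))
    (hPh : Tendsto (fun P : ℕ => 1 / ((P : ℝ) * h P)) atTop (nhds 0)) :
    Tendsto (fun P : ℕ => (2 + 8 * edofCoeff σ lam (h P) ^ 2 * h P / σ) / P) atTop (nhds 0) := by
  set K := lam ^ 2 / (2 * π * σ ^ 3)
  have hbound : ∀ P : ℕ, (2 + 8 * edofCoeff σ lam (h P) ^ 2 * h P / σ) / P =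
      2 * (1 / (P : ℝ)) + 8 * K * ((σ ^ 2 + h P ^ 2) * (1 / ((P : ℝ) * h P))) := fun P => by
    rw [show 8 * edofCoeff σ lam (h P) ^ 2 * h P / σ =
        8 * (edofCoeff σ lam (h P) ^ 2 * h P / σ) by ring, edofCoeff_sq_mul_div hσ (hpos P)]
    ring
  simp_rw [hbound]
  simpa using (tendsto_one_div_atTop_nhds_zero_nat.const_mul 2).add
    ((((hh0.pow 2).const_add (σ ^ 2)).mul hPh).const_mul (8 * K))

/-- the variance of `(1/P)·EDOF_HT(Y, λ, h(P))` vanishes as `P → ∞`. -/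
theorem score_dof_vanishing_variance
    {Ω : Type*} [MeasurableSpace Ω] (μpr : Measure Ω) [IsProbabilityMeasure μpr]
    (σ lam : ℝ) (hσ : 0 < σ) (hlam : 0 < lam)
    (x0 : ℕ → ℝ) (W : ℕ → Ω → ℝ)
    (hmeas : ∀ i, Measurable (W i))
    (hindep : iIndepFun W μpr)
    (hdist : ∀ i, Measure.map (W i) μpr = gaussianReal 0 ⟨σ ^ 2, sq_nonneg σ⟩)
    (h : ℕ → ℝ) (hpos : ∀ P, 0 < h P)
    (hh0 : Tendsto h atTop (nhds 0))
    (hPh : Tendsto (fun P : ℕ => 1 / ((P : ℝ) * h P)) atTop (nhds 0)) :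
    Tendsto
      (fun P : ℕ =>
        variance (fun ω => (1 / (P : ℝ)) * EDOF σ lam (h P) P (fun i => x0 i + W i ω)) μpr)
      atTop (nhds 0) :=
  squeeze_zero (fun _ => variance_nonneg _ _)
    (fun P => variance_div_EDOF_le hσ hlam.le (hpos P) x0 hmeas hindep hdist P)
    (tendsto_edof_variance_bound hσ hpos hh0 hPh)
end

section
/- Let σ > 0, λ > 0, let x0 : ℕ → ℝ be a fixed real sequence, let (W_i)_{i∈ℕ} be i.i.d. centered Gaussian random variables of variance σ², and set Y_i = x0_i + W_i. Let h : ℕ → (0,∞) satisfy h(P) → 0 as P → ∞. Then (1/P)·(E[SCORE((Y_1,…,Y_P), λ, h(P))] − E[‖HT((Y_1,…,Y_P),λ) − (x0_1,…,x0_P)‖²]) → 0 as P → ∞ (asymptotic unbiasedness of SCORE as a risk estimator). -/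
open MeasureTheory ProbabilityTheory Filter Real

/-- The Stein COnsistent Risk Estimator:
`SCORE(y, λ, h) = ‖y − HT(y,λ)‖² − P σ² + 2 σ² EDOF_HT(y, λ, h)`. -/
noncomputable def SCORE (σ lam h : ℝ) (P : ℕ) (y : ℕ → ℝ) : ℝ :=
  (∑ i ∈ Finset.range P, (y i - HT lam (y i)) ^ 2) - P * σ ^ 2 +
    2 * σ ^ 2 * EDOF σ lam h P y

/-!
Write `Y = m + W` for one coordinate, with `W ~ N(0, σ²)`. Since
`(y - HT y)² - (HT y - m)² = (y - m)² + 2 (y - m) (m - HT y)`, the bias of that coordinate of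
`SCORE` is `2 (σ² P(|Y| > λ) - E[(Y - m) HT Y])` plus the expectation of the smoothed term of
`EDOF`. Integrating by parts against the Gaussian density (Stein's identity), the jumps of size `λ`
of `HT` at `±λ` evaluate the first part to `-(2σλ/√(2π)) ∑_{a = ±λ} exp (-(a - m)² / (2σ²))`.
The second part is a Gaussian convolution, and equals the same sum with the opposite sign and with
`σ² + h²` in place of `σ²`. Since `0 ≤ exp (-u / (2 (σ² + h²))) - exp (-u / (2σ²)) ≤ h² / (e σ²)`
for every `u ≥ 0`, each coordinate has bias `O(h²)` uniformly in `x0`, so the averaged bias tends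
to `0` with `h`.
-/

open Set
open scoped NNReal ENNReal

section GaussianReal

variable {μ : ℝ} {v : ℝ≥0}

lemma integrable_gaussianPDFReal_mul_iff (hv : v ≠ 0) {f : ℝ → ℝ} :
    Integrable (fun x => gaussianPDFReal μ v x * f x) ↔ Integrable f (gaussianReal μ v) := by
  rw [gaussianReal_of_var_ne_zero _ hv, integrable_withDensity_iff (measurable_gaussianPDF _ _)
    (ae_of_all _ fun _ => gaussianPDF_lt_top)]
  simp only [toReal_gaussianPDF, mul_comm]

lemma hasDerivAt_gaussianPDFReal (x : ℝ) :
    HasDerivAt (gaussianPDFReal μ v) (-((x - μ) / v) * gaussianPDFReal μ v x) x := by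
  have hexponent : HasDerivAt (fun y => -(y - μ) ^ 2 / (2 * v)) (-((x - μ) / v)) x :=
    ((((hasDerivAt_id' x).sub_const μ).fun_pow 2).fun_neg.div_const (2 * (v : ℝ))).congr_deriv
      (by ring)
  rw [gaussianPDFReal_def]
  exact (hexponent.exp.const_mul _).congr_deriv (by ring)

lemma integrable_fun_id_gaussianReal : Integrable (fun x => x) (gaussianReal μ v) :=
  (memLp_id_gaussianReal 1).integrable le_rfl

lemma integrable_quadratic_gaussianReal (a b c : ℝ) :
    Integrable (fun x => a + b * x + c * x ^ 2) (gaussianReal μ v) :=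
  ((integrable_const a).add (integrable_fun_id_gaussianReal.const_mul b)).add
    ((memLp_id_gaussianReal 2).integrable_sq.const_mul c)

lemma integral_sub_mean_gaussianReal : ∫ y, (y - μ) ∂gaussianReal μ v = 0 := by
  rw [integral_sub integrable_fun_id_gaussianReal (integrable_const μ),
    integral_id_gaussianReal, integral_const, probReal_univ, one_smul, sub_self]

lemma integral_sq_sub_mean_gaussianReal : ∫ y, (y - μ) ^ 2 ∂gaussianReal μ v = v := by
  simpa [variance_eq_integral measurable_id'.aemeasurable, integral_id_gaussianReal]
    using variance_fun_id_gaussianReal (μ := μ) (v := v)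

lemma hasDerivAt_mul_gaussianPDFReal (hv : v ≠ 0) (x : ℝ) :
    HasDerivAt (fun y => v * y * gaussianPDFReal μ v y)
      (gaussianPDFReal μ v x * (v - (x - μ) * x)) x := by
  have hv' : (v : ℝ) ≠ 0 := by exact_mod_cast hv
  refine (((hasDerivAt_id' x).const_mul (v : ℝ)).mul
    (hasDerivAt_gaussianPDFReal x)).congr_deriv ?_
  field_simp
  ring

lemma integrable_mul_gaussianPDFReal (hv : v ≠ 0) :
    Integrable (fun y => v * y * gaussianPDFReal μ v y) :=
  ((integrable_gaussianPDFReal_mul_iff hv).2 (integrable_quadratic_gaussianReal 0 v 0)).congr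
    (ae_of_all _ fun y => by ring)

lemma integrable_gaussianPDFReal_mul_sub_mul (hv : v ≠ 0) :
    Integrable (fun y => gaussianPDFReal μ v y * (v - (y - μ) * y)) :=
  (integrable_gaussianPDFReal_mul_iff hv).2 <|
    (integrable_quadratic_gaussianReal (v : ℝ) μ (-1)).congr (ae_of_all _ fun y => by ring)

lemma integral_Ioi_gaussianPDFReal_mul_sub_mul (hv : v ≠ 0) (a : ℝ) :
    ∫ y in Ioi a, gaussianPDFReal μ v y * (v - (y - μ) * y)
      = -(v * a * gaussianPDFReal μ v a) := by
  have hderiv := fun x (_ : x ∈ Ici a) => hasDerivAt_mul_gaussianPDFReal (μ := μ) hv x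
  have hint := (integrable_gaussianPDFReal_mul_sub_mul (μ := μ) hv).integrableOn (s := Ioi a)
  have hlim := tendsto_zero_of_hasDerivAt_of_integrableOn_Ioi
    (fun x hx => hderiv x (Ioi_subset_Ici_self hx)) hint
    (integrable_mul_gaussianPDFReal hv).integrableOn
  rw [integral_Ioi_of_hasDerivAt_of_tendsto' hderiv hint hlim, zero_sub]

lemma integral_Iic_gaussianPDFReal_mul_sub_mul (hv : v ≠ 0) (a : ℝ) :
    ∫ y in Iic a, gaussianPDFReal μ v y * (v - (y - μ) * y) = v * a * gaussianPDFReal μ v a := by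
  have hderiv := fun x (_ : x ∈ Iic a) => hasDerivAt_mul_gaussianPDFReal (μ := μ) hv x
  have hint := (integrable_gaussianPDFReal_mul_sub_mul (μ := μ) hv).integrableOn (s := Iic a)
  have hlim := tendsto_zero_of_hasDerivAt_of_integrableOn_Iic hderiv hint
    (integrable_mul_gaussianPDFReal hv).integrableOn
  rw [integral_Iic_of_hasDerivAt_of_tendsto' hderiv hint hlim, sub_zero]

theorem integral_exp_neg_sq_div_gaussianReal (hv : v ≠ 0) {w : ℝ} (hw : 0 < w) (a : ℝ) :
    ∫ y, rexp (-(y - a) ^ 2 / (2 * w)) ∂gaussianReal μ v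
      = √(w / (v + w)) * rexp (-(a - μ) ^ 2 / (2 * (v + w))) := by
  have hv₀ : (0 : ℝ) < v := by positivity
  set s : ℝ := v + w
  have hs₀ : 0 < s := by positivity
  set B : ℝ := s / (2 * v * w)
  set d : ℝ := (μ * w + a * v) / s
  have hcomplete_square : ∀ y, gaussianPDFReal μ v y • rexp (-(y - a) ^ 2 / (2 * w))
      = ((√(2 * π * v))⁻¹ * rexp (-(a - μ) ^ 2 / (2 * s))) * rexp (-B * (y - d) ^ 2) := by
    intro y
    simp only [gaussianPDFReal, smul_eq_mul, mul_assoc, ← Real.exp_add, B, d]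
    congr 2
    field_simp
    ring
  simp_rw [integral_gaussianReal_eq_integral_smul hv, hcomplete_square]
  rw [integral_const_mul, integral_sub_right_eq_self (fun y => rexp (-B * y ^ 2)) d,
    integral_gaussian, mul_right_comm, ← Real.sqrt_inv, ← Real.sqrt_mul (by positivity)]
  congr 2
  simp only [B]
  field_simp

end GaussianReal

lemma ProbabilityTheory.HasLaw.integrable_comp {Ω 𝓧 E : Type*} [MeasurableSpace Ω]
    [MeasurableSpace 𝓧] [NormedAddCommGroup E] {P : Measure Ω} {μ : Measure 𝓧} {X : Ω → 𝓧}
    (hX : HasLaw X μ P) {f : 𝓧 → E} (hf : Integrable f μ) : Integrable (fun ω => f (X ω)) P := by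
  rw [← hX.map_eq] at hf
  exact hf.comp_aemeasurable hX.aemeasurable

lemma integrable_ite_lt_abs {ν : Measure ℝ} [IsFiniteMeasure ν] (lam : ℝ) :
    Integrable (fun y : ℝ => if lam < |y| then (1 : ℝ) else 0) ν :=
  .of_bound (Measurable.ite (measurableSet_lt measurable_const measurable_id.abs)
    measurable_const measurable_const).aestronglyMeasurable 1
    (ae_of_all _ fun y => by split_ifs <;> simp)

lemma integrable_exp_neg_sq_div {ν : Measure ℝ} [IsFiniteMeasure ν] (a : ℝ) {d : ℝ}
    (hd : 0 ≤ d) : Integrable (fun y => rexp (-(y - a) ^ 2 / d)) ν :=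
  .of_bound (by fun_prop) 1 (ae_of_all _ fun y => by
    rw [Real.norm_eq_abs, abs_of_pos (exp_pos _), exp_le_one_iff]
    exact div_nonpos_of_nonpos_of_nonneg (neg_nonpos.2 (sq_nonneg _)) hd)

lemma measurable_HT (lam : ℝ) : Measurable (HT lam) :=
  Measurable.ite (measurableSet_lt measurable_id.abs measurable_const) measurable_const
    measurable_id

lemma abs_HT_le (lam y : ℝ) : |HT lam y| ≤ |y| := by
  unfold HT
  split_ifs <;> simp

lemma sq_sub_HT_le (lam y : ℝ) : (y - HT lam y) ^ 2 ≤ lam ^ 2 := by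
  unfold HT
  split_ifs with h
  · rw [sub_zero, ← sq_abs]
    exact pow_le_pow_left₀ (abs_nonneg y) h.le 2
  · simp [sq_nonneg]

lemma memLp_HT {p : ℝ≥0∞} {ν : Measure ℝ} (hid : MemLp id p ν) (lam : ℝ) :
    MemLp (HT lam) p ν :=
  hid.of_le (measurable_HT lam).aestronglyMeasurable
    (ae_of_all _ fun y => by simpa using abs_HT_le lam y)

lemma mul_ite_sub_mul_HT_eq_indicator {lam y : ℝ} (c μ : ℝ) (hy₁ : y ≠ lam) (hy₂ : y ≠ -lam) :
    c * (if lam < |y| then 1 else 0) - (y - μ) * HT lam y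
      = (Iic (-lam) ∪ Ioi lam).indicator (fun y => c - (y - μ) * y) y := by
  have hmem : y ∈ Iic (-lam) ∪ Ioi lam ↔ lam < |y| := by
    rw [mem_union, mem_Iic, mem_Ioi, lt_abs]
    constructor
    · rintro (h | h)
      · exact Or.inr (by linarith [lt_of_le_of_ne h hy₂])
      · exact Or.inl h
    · rintro (h | h)
      · exact Or.inr h
      · exact Or.inl (by linarith)
  by_cases h : lam < |y|
  · rw [indicator_of_mem (hmem.2 h), HT, if_pos h, if_neg h.not_gt]
    ring
  · have hlt : |y| < lam := lt_of_le_of_ne (not_lt.1 h) fun he =>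
      ((abs_eq (he ▸ abs_nonneg y)).1 he).elim hy₁ hy₂
    rw [indicator_of_notMem (mt hmem.1 h), HT, if_neg h, if_pos hlt]
    ring

theorem integral_stein_HT_gaussianReal {μ : ℝ} {v : ℝ≥0} (hv : v ≠ 0) {lam : ℝ} (hlam : 0 < lam) :
    ∫ y, (v * (if lam < |y| then 1 else 0) - (y - μ) * HT lam y) ∂gaussianReal μ v
      = -(v * lam * (gaussianPDFReal μ v lam + gaussianPDFReal μ v (-lam))) := by
  have hae : (fun y => gaussianPDFReal μ v y •
        (v * (if lam < |y| then 1 else 0) - (y - μ) * HT lam y))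
      =ᵐ[volume] (Iic (-lam) ∪ Ioi lam).indicator
        (fun y => gaussianPDFReal μ v y * (v - (y - μ) * y)) := by
    filter_upwards [Measure.ae_ne volume lam, Measure.ae_ne volume (-lam)] with y hy₁ hy₂
    rw [smul_eq_mul, mul_ite_sub_mul_HT_eq_indicator _ _ hy₁ hy₂, indicator_mul_right]
  have hint := integrable_gaussianPDFReal_mul_sub_mul (μ := μ) hv
  rw [integral_gaussianReal_eq_integral_smul hv, integral_congr_ae hae,
    integral_indicator (measurableSet_Iic.union measurableSet_Ioi),
    setIntegral_union (Iic_disjoint_Ioi (by linarith)) measurableSet_Ioi hint.integrableOn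
      hint.integrableOn,
    integral_Iic_gaussianPDFReal_mul_sub_mul hv, integral_Ioi_gaussianPDFReal_mul_sub_mul hv]
  ring

noncomputable def scoreTerm (σ lam h y : ℝ) : ℝ :=
  (y - HT lam y) ^ 2 + 2 * σ ^ 2 * ((if lam < |y| then 1 else 0) +
    lam * √(σ ^ 2 + h ^ 2) / (√(2 * π) * σ * h) *
      (rexp (-(y + lam) ^ 2 / (2 * h ^ 2)) + rexp (-(y - lam) ^ 2 / (2 * h ^ 2))))

lemma SCORE_eq_sum (σ lam h : ℝ) (P : ℕ) (y : ℕ → ℝ) :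
    SCORE σ lam h P y = ∑ i ∈ Finset.range P, (scoreTerm σ lam h (y i) - σ ^ 2) := by
  simp only [SCORE, EDOF, scoreTerm, Finset.sum_sub_distrib, Finset.sum_add_distrib,
    ← Finset.mul_sum, Finset.sum_const, Finset.card_range, nsmul_eq_mul]
  ring

lemma integrable_scoreTerm {ν : Measure ℝ} [IsFiniteMeasure ν] (σ lam h : ℝ) :
    Integrable (scoreTerm σ lam h) ν := by
  have hresidual : Integrable (fun y => (y - HT lam y) ^ 2) ν :=
    .of_bound ((measurable_id.sub (measurable_HT lam)).pow_const 2).aestronglyMeasurable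
      (lam ^ 2) (ae_of_all _ fun y => by
        rw [Real.norm_eq_abs, abs_of_nonneg (sq_nonneg _)]
        exact sq_sub_HT_le lam y)
  have hexp := integrable_exp_neg_sq_div (ν := ν) (-lam) (d := 2 * h ^ 2) (by positivity)
  simp only [sub_neg_eq_add] at hexp
  exact hresidual.add (((integrable_ite_lt_abs lam).add
    ((hexp.add (integrable_exp_neg_sq_div lam (by positivity))).const_mul _)).const_mul _)

theorem integral_scoreTerm_sub_risk {σ lam t : ℝ} {v : ℝ≥0} (hσ : 0 < σ)
    (hvσ : (v : ℝ) = σ ^ 2) (hlam : 0 < lam) (ht : 0 < t) (m : ℝ) :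
    (∫ y, scoreTerm σ lam t y ∂gaussianReal m v) - σ ^ 2
      - ∫ y, (HT lam y - m) ^ 2 ∂gaussianReal m v
      = 2 * σ * lam / √(2 * π) *
        ((rexp (-(lam - m) ^ 2 / (2 * (σ ^ 2 + t ^ 2))) - rexp (-(lam - m) ^ 2 / (2 * σ ^ 2)))
          + (rexp (-(-lam - m) ^ 2 / (2 * (σ ^ 2 + t ^ 2)))
            - rexp (-(-lam - m) ^ 2 / (2 * σ ^ 2)))) := by
  have hv : v ≠ 0 := by rw [← NNReal.coe_ne_zero, hvσ]; positivity
  set c := lam * √(σ ^ 2 + t ^ 2) / (√(2 * π) * σ * t)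
  have hmem : MemLp (fun y => y - m) 2 (gaussianReal m v) :=
    (memLp_id_gaussianReal' 2 ENNReal.ofNat_ne_top).sub (memLp_const m)
  have hSq : Integrable (fun y => (y - m) ^ 2) (gaussianReal m v) := hmem.integrable_sq
  have hLin : Integrable (fun y => 2 * m * (y - m)) (gaussianReal m v) :=
    (integrable_fun_id_gaussianReal.sub (integrable_const m)).const_mul _
  have hStein : Integrable
      (fun y => 2 * (v * (if lam < |y| then 1 else 0) - (y - m) * HT lam y)) (gaussianReal m v) :=
    (((integrable_ite_lt_abs lam).const_mul _).sub (hmem.integrable_mul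
      (memLp_HT (memLp_id_gaussianReal' 2 ENNReal.ofNat_ne_top) lam))).const_mul _
  have hExp := fun a => integrable_exp_neg_sq_div (ν := gaussianReal m v) a
    (d := 2 * t ^ 2) (by positivity)
  have hRisk : Integrable (fun y => (HT lam y - m) ^ 2) (gaussianReal m v) :=
    ((memLp_HT (memLp_id_gaussianReal' 2 ENNReal.ofNat_ne_top) lam).sub
      (memLp_const m)).integrable_sq
  have hsplit : ∀ y, scoreTerm σ lam t y - (HT lam y - m) ^ 2
      = (y - m) ^ 2 + 2 * m * (y - m)
        + 2 * (v * (if lam < |y| then 1 else 0) - (y - m) * HT lam y)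
        + 2 * σ ^ 2 * c
          * (rexp (-(y - -lam) ^ 2 / (2 * t ^ 2)) + rexp (-(y - lam) ^ 2 / (2 * t ^ 2))) := by
    intro y
    simp only [scoreTerm, sub_neg_eq_add, hvσ, c]
    ring
  rw [sub_right_comm, ← integral_sub (integrable_scoreTerm σ lam t) hRisk]
  simp_rw [hsplit]
  rw [integral_add ((hSq.fun_add hLin).fun_add hStein)
      (((hExp _).fun_add (hExp _)).const_mul _),
    integral_add (hSq.fun_add hLin) hStein, integral_add hSq hLin, integral_const_mul,
    integral_const_mul, integral_const_mul, integral_add (hExp _) (hExp _),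
    integral_sq_sub_mean_gaussianReal, integral_sub_mean_gaussianReal,
    integral_stein_HT_gaussianReal hv hlam,
    integral_exp_neg_sq_div_gaussianReal hv (pow_pos ht 2),
    integral_exp_neg_sq_div_gaussianReal hv (pow_pos ht 2)]
  have hσ' : √(2 * π * σ ^ 2) = √(2 * π) * σ := by
    rw [Real.sqrt_mul' _ (sq_nonneg σ), Real.sqrt_sq hσ.le]
  have ht' : √(t ^ 2 / (σ ^ 2 + t ^ 2)) = t / √(σ ^ 2 + t ^ 2) := by
    rw [Real.sqrt_div' _ (by positivity), Real.sqrt_sq ht.le]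
  simp only [gaussianPDFReal, hvσ, hσ', ht', c]
  field_simp
  ring

lemma exp_neg_div_le_exp_neg_div {u a b : ℝ} (hb : 0 < b) (hba : b ≤ a) (hu : 0 ≤ u) :
    rexp (-u / b) ≤ rexp (-u / a) := by
  rw [exp_le_exp, neg_div, neg_div, neg_le_neg_iff]
  exact div_le_div_of_nonneg_left hu hb hba

lemma exp_neg_div_sub_exp_neg_div_le {a b : ℝ} (u : ℝ) (hb : 0 < b) (hba : b ≤ a) :
    rexp (-u / a) - rexp (-u / b) ≤ rexp (-1) * ((a - b) / b) := by
  have ha : 0 < a := hb.trans_le hba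
  calc rexp (-u / a) - rexp (-u / b) = rexp (-u / a) * (1 - rexp (-(u / b - u / a))) := by
        rw [mul_sub, mul_one, ← Real.exp_add]; ring_nf
    _ ≤ rexp (-u / a) * (u / b - u / a) :=
        mul_le_mul_of_nonneg_left (by linarith [Real.add_one_le_exp (-(u / b - u / a))])
          (exp_pos _).le
    _ = u / a * rexp (-(u / a)) * ((a - b) / b) := by
        rw [neg_div]; field_simp
    _ ≤ rexp (-1) * ((a - b) / b) :=
        mul_le_mul_of_nonneg_right (Real.mul_exp_neg_le_exp_neg_one _)
          (div_nonneg (by linarith) hb.le)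

lemma abs_integral_scoreTerm_sub_risk_le {σ lam t : ℝ} {v : ℝ≥0} (hσ : 0 < σ)
    (hvσ : (v : ℝ) = σ ^ 2) (hlam : 0 < lam) (ht : 0 < t) (m : ℝ) :
    |(∫ y, scoreTerm σ lam t y ∂gaussianReal m v) - σ ^ 2
      - ∫ y, (HT lam y - m) ^ 2 ∂gaussianReal m v|
      ≤ 4 * lam * rexp (-1) / (√(2 * π) * σ) * t ^ 2 := by
  rw [integral_scoreTerm_sub_risk hσ hvσ hlam ht]
  have hb : 0 < 2 * σ ^ 2 := by positivity
  have hba : 2 * σ ^ 2 ≤ 2 * (σ ^ 2 + t ^ 2) := by nlinarith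
  have hratio : (2 * (σ ^ 2 + t ^ 2) - 2 * σ ^ 2) / (2 * σ ^ 2) = t ^ 2 / σ ^ 2 := by
    field_simp; ring
  have h₁ := exp_neg_div_sub_exp_neg_div_le ((lam - m) ^ 2) hb hba
  have h₂ := exp_neg_div_sub_exp_neg_div_le ((-lam - m) ^ 2) hb hba
  have h₁' := exp_neg_div_le_exp_neg_div hb hba (sq_nonneg (lam - m))
  have h₂' := exp_neg_div_le_exp_neg_div hb hba (sq_nonneg (-lam - m))
  rw [hratio] at h₁ h₂
  rw [abs_of_nonneg (mul_nonneg (by positivity) (by linarith))]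
  calc _ ≤ 2 * σ * lam / √(2 * π) * (2 * (rexp (-1) * (t ^ 2 / σ ^ 2))) := by
        gcongr; linarith
    _ = _ := by field_simp; ring

lemma abs_integral_SCORE_sub_risk_le {Ω : Type*} [MeasurableSpace Ω] {P : Measure Ω}
    [IsProbabilityMeasure P] {σ lam t : ℝ} {v : ℝ≥0} (hσ : 0 < σ) (hvσ : (v : ℝ) = σ ^ 2)
    (hlam : 0 < lam) (ht : 0 < t) {x0 : ℕ → ℝ} {Y : ℕ → Ω → ℝ}
    (hY : ∀ i, HasLaw (Y i) (gaussianReal (x0 i) v) P) (n : ℕ) :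
    |(∫ ω, SCORE σ lam t n (fun i => Y i ω) ∂P)
      - ∫ ω, ∑ i ∈ Finset.range n, (HT lam (Y i ω) - x0 i) ^ 2 ∂P|
      ≤ 4 * lam * rexp (-1) / (√(2 * π) * σ) * t ^ 2 * n := by
  have hscore := fun i => (hY i).integrable_comp (integrable_scoreTerm σ lam t)
  have hrisk : ∀ i, Integrable (fun ω => (HT lam (Y i ω) - x0 i) ^ 2) P := fun i =>
    (hY i).integrable_comp (f := fun y => (HT lam y - x0 i) ^ 2)
      ((memLp_HT (memLp_id_gaussianReal' 2 ENNReal.ofNat_ne_top) lam).sub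
        (memLp_const (x0 i))).integrable_sq
  have hcoord : ∀ i, (∫ ω, (scoreTerm σ lam t (Y i ω) - σ ^ 2) ∂P)
      - ∫ ω, (HT lam (Y i ω) - x0 i) ^ 2 ∂P
      = (∫ y, scoreTerm σ lam t y ∂gaussianReal (x0 i) v) - σ ^ 2
        - ∫ y, (HT lam y - x0 i) ^ 2 ∂gaussianReal (x0 i) v := by
    intro i
    have hscore_law : ∫ ω, scoreTerm σ lam t (Y i ω) ∂P
        = ∫ y, scoreTerm σ lam t y ∂gaussianReal (x0 i) v :=
      (hY i).integral_comp (integrable_scoreTerm σ lam t).aestronglyMeasurable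
    have hrisk_law : ∫ ω, (HT lam (Y i ω) - x0 i) ^ 2 ∂P
        = ∫ y, (HT lam y - x0 i) ^ 2 ∂gaussianReal (x0 i) v :=
      (hY i).integral_comp (f := fun y => (HT lam y - x0 i) ^ 2)
        (((measurable_HT lam).sub_const _).pow_const 2).aestronglyMeasurable
    rw [integral_sub (hscore i) (integrable_const _), integral_const, probReal_univ, one_smul,
      hscore_law, hrisk_law]
  simp_rw [SCORE_eq_sum]
  rw [integral_finsetSum _ fun i _ => (hscore i).sub' (integrable_const _),
    integral_finsetSum _ fun i _ => hrisk i, ← Finset.sum_sub_distrib]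
  simp_rw [hcoord]
  calc _ ≤ ∑ i ∈ Finset.range n, 4 * lam * rexp (-1) / (√(2 * π) * σ) * t ^ 2 :=
        (Finset.abs_sum_le_sum_abs _ _).trans
          (Finset.sum_le_sum fun i _ => abs_integral_scoreTerm_sub_risk_le hσ hvσ hlam ht (x0 i))
    _ = _ := by rw [Finset.sum_const, Finset.card_range, nsmul_eq_mul, mul_comm]
theorem score_asymptotic_unbiasedness_general
    {Ω : Type*} [MeasurableSpace Ω] (μpr : Measure Ω) [IsProbabilityMeasure μpr]
    (σ lam : ℝ) (hσ : 0 < σ) (hlam : 0 < lam)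
    (x0 : ℕ → ℝ) (W : ℕ → Ω → ℝ)
    (hmeas : ∀ i, Measurable (W i))
    (hdist : ∀ i, Measure.map (W i) μpr = gaussianReal 0 ⟨σ ^ 2, sq_nonneg σ⟩)
    (h : ℕ → ℝ) (hpos : ∀ P, 0 < h P)
    (hh0 : Tendsto h atTop (nhds 0)) :
    Tendsto
      (fun P : ℕ => (1 / (P : ℝ)) *
        ((∫ ω, SCORE σ lam (h P) P (fun i => x0 i + W i ω) ∂μpr) -
          ∫ ω', ∑ i ∈ Finset.range P, (HT lam (x0 i + W i ω') - x0 i) ^ 2 ∂μpr))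
      atTop (nhds 0) := by
  set C := 4 * lam * rexp (-1) / (√(2 * π) * σ)
  have hlaw : ∀ i, HasLaw (fun ω => x0 i + W i ω) (gaussianReal (x0 i) ⟨σ ^ 2, sq_nonneg σ⟩) μpr :=
    fun i => by simpa using gaussianReal_const_add ⟨(hmeas i).aemeasurable, hdist i⟩ (x0 i)
  have hbound : ∀ P : ℕ, ‖(1 / (P : ℝ)) *
      ((∫ ω, SCORE σ lam (h P) P (fun i => x0 i + W i ω) ∂μpr) -
        ∫ ω', ∑ i ∈ Finset.range P, (HT lam (x0 i + W i ω') - x0 i) ^ 2 ∂μpr)‖ ≤ C * h P ^ 2 :=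
    fun P => by
      rw [norm_mul, norm_div, norm_one, Real.norm_natCast, Real.norm_eq_abs, one_div_mul_eq_div]
      exact div_le_of_le_mul₀ P.cast_nonneg (by positivity)
        (abs_integral_SCORE_sub_risk_le hσ rfl hlam (hpos P) hlaw P)
  refine squeeze_zero_norm hbound ?_
  simpa using (hh0.pow 2).const_mul C

/-- asymptotic unbiasedness of SCORE as a risk estimator:
`(1/P)(E[SCORE(Y, λ, h(P))] − E‖HT(Y,λ) − x0‖²) → 0` as `P → ∞`. -/
theorem score_asymptotic_unbiasedness
    {Ω : Type*} [MeasurableSpace Ω] (μpr : Measure Ω) [IsProbabilityMeasure μpr]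
    (σ lam : ℝ) (hσ : 0 < σ) (hlam : 0 < lam)
    (x0 : ℕ → ℝ) (W : ℕ → Ω → ℝ)
    (hmeas : ∀ i, Measurable (W i))
    (hindep : iIndepFun W μpr)
    (hdist : ∀ i, Measure.map (W i) μpr = gaussianReal 0 ⟨σ ^ 2, sq_nonneg σ⟩)
    (h : ℕ → ℝ) (hpos : ∀ P, 0 < h P)
    (hh0 : Tendsto h atTop (nhds 0)) :
    Tendsto
      (fun P : ℕ => (1 / (P : ℝ)) *
        ((∫ ω, SCORE σ lam (h P) P (fun i => x0 i + W i ω) ∂μpr) -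
          ∫ ω', ∑ i ∈ Finset.range P, (HT lam (x0 i + W i ω') - x0 i) ^ 2 ∂μpr))
      atTop (nhds 0) :=
  score_asymptotic_unbiasedness_general μpr σ lam hσ hlam x0 W hmeas hdist h hpos hh0
end

section
/- Let σ > 0, λ > 0, μ ∈ ℝ, and Y = μ + W with W ~ N(0,σ²). Then E[sign(Y)·W·1{|Y| > λ}] = (σ/√(2π))·[exp(−(μ + λ)²/(2σ²)) + exp(−(μ − λ)²/(2σ²))]. -/
/-!
On `|μ₀ + W| > λ` the integrand equals `W` when `W > λ - μ₀` and `-W` when `W < -λ - μ₀`,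
so the expectation is a difference of two tail integrals of `x` against the centered Gaussian
density `φ`. Since `v φ' = -x φ` and `φ` vanishes at `±∞`, each tail integral is `±v φ` at the
endpoint, and `v φ(a) = σ / √(2π) · exp (-a² / (2σ²))` for `v = σ²`.
-/

open MeasureTheory ProbabilityTheory Filter Real
open scoped NNReal Topology

namespace ProbabilityTheory

lemma hasDerivAt_gaussianPDFReal (μ : ℝ) (v : ℝ≥0) (x : ℝ) :
    HasDerivAt (gaussianPDFReal μ v) (-((x - μ) / v) * gaussianPDFReal μ v x) x := by
  have h := ((((hasDerivAt_id x).sub_const μ).pow 2).neg.div_const (2 * (v : ℝ))).exp.const_mul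
    (√(2 * π * v))⁻¹
  refine h.congr_deriv ?_
  simp only [gaussianPDFReal, id, Pi.neg_apply, Pi.pow_apply]
  ring

lemma tendsto_gaussianPDFReal_cocompact (v : ℝ≥0) :
    Tendsto (gaussianPDFReal 0 v) (cocompact ℝ) (𝓝 0) := by
  rcases eq_or_ne v 0 with rfl | hv
  · rw [gaussianPDFReal_zero_var]
    exact tendsto_const_nhds
  have hv' : (0 : ℝ) < v := by positivity
  convert (tendsto_rpow_abs_mul_exp_neg_mul_sq_cocompact (a := 1 / (2 * v)) (by positivity)
    0).const_mul (√(2 * π * v))⁻¹ using 2 with x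
  · rw [gaussianPDFReal, rpow_zero, one_mul]
    congr 2
    ring
  · simp

lemma integrable_mul_gaussianPDFReal (v : ℝ≥0) :
    Integrable (fun x ↦ x * gaussianPDFReal 0 v x) := by
  rcases eq_or_ne v 0 with rfl | hv
  · simp
  have hv' : (0 : ℝ) < v := by positivity
  convert (integrable_mul_exp_neg_mul_sq (b := 1 / (2 * v)) (by positivity)).const_mul
    (√(2 * π * v))⁻¹ using 2 with x
  rw [gaussianPDFReal]
  ring_nf

lemma hasDerivAt_mul_gaussianPDFReal (v : ℝ≥0) (x : ℝ) :
    HasDerivAt (fun x ↦ v * gaussianPDFReal 0 v x) (-(x * gaussianPDFReal 0 v x)) x := by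
  rcases eq_or_ne v 0 with rfl | hv
  · simpa using hasDerivAt_const x (0 : ℝ)
  refine ((hasDerivAt_gaussianPDFReal 0 v x).const_mul (v : ℝ)).congr_deriv ?_
  have hv' : (v : ℝ) ≠ 0 := by exact_mod_cast hv
  field_simp
  ring

lemma setIntegral_Ioi_mul_gaussianPDFReal (v : ℝ≥0) (a : ℝ) :
    ∫ x in Set.Ioi a, x * gaussianPDFReal 0 v x = v * gaussianPDFReal 0 v a := by
  have h := integral_Ioi_of_hasDerivAt_of_tendsto' (a := a)
    (fun x _ ↦ hasDerivAt_mul_gaussianPDFReal v x)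
    (integrable_mul_gaussianPDFReal v).neg.integrableOn
    (by simpa using
      ((tendsto_gaussianPDFReal_cocompact v).mono_left atTop_le_cocompact).const_mul (v : ℝ))
  rwa [integral_neg, zero_sub, neg_inj] at h

lemma setIntegral_Iio_mul_gaussianPDFReal (v : ℝ≥0) (b : ℝ) :
    ∫ x in Set.Iio b, x * gaussianPDFReal 0 v x = -(v * gaussianPDFReal 0 v b) := by
  have h := integral_Iic_of_hasDerivAt_of_tendsto' (a := b)
    (fun x _ ↦ hasDerivAt_mul_gaussianPDFReal v x)
    (integrable_mul_gaussianPDFReal v).neg.integrableOn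
    (by simpa using
      ((tendsto_gaussianPDFReal_cocompact v).mono_left atBot_le_cocompact).const_mul (v : ℝ))
  rw [integral_neg, sub_zero] at h
  rw [← integral_Iic_eq_integral_Iio, ← h, neg_neg]

lemma setIntegral_gaussianReal_eq_setIntegral_smul {E : Type*} [NormedAddCommGroup E]
    [NormedSpace ℝ E] {μ : ℝ} {v : ℝ≥0} {f : ℝ → E} {s : Set ℝ} (hv : v ≠ 0)
    (hs : MeasurableSet s) :
    ∫ x in s, f x ∂gaussianReal μ v = ∫ x in s, gaussianPDFReal μ v x • f x := by
  rw [← integral_indicator hs, integral_gaussianReal_eq_integral_smul hv,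
    ← integral_indicator hs]
  simp_rw [Set.indicator_smul]

lemma setIntegral_Ioi_id_gaussianReal (v : ℝ≥0) (a : ℝ) :
    ∫ x in Set.Ioi a, x ∂gaussianReal 0 v = v * gaussianPDFReal 0 v a := by
  rcases eq_or_ne v 0 with rfl | hv
  · simp [gaussianReal_zero_var, setIntegral_dirac]
  rw [setIntegral_gaussianReal_eq_setIntegral_smul hv measurableSet_Ioi,
    ← setIntegral_Ioi_mul_gaussianPDFReal]
  simp_rw [smul_eq_mul, mul_comm]

lemma setIntegral_Iio_id_gaussianReal (v : ℝ≥0) (b : ℝ) :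
    ∫ x in Set.Iio b, x ∂gaussianReal 0 v = -(v * gaussianPDFReal 0 v b) := by
  rcases eq_or_ne v 0 with rfl | hv
  · simp [gaussianReal_zero_var, setIntegral_dirac]
  rw [setIntegral_gaussianReal_eq_setIntegral_smul hv measurableSet_Iio,
    ← setIntegral_Iio_mul_gaussianPDFReal]
  simp_rw [smul_eq_mul, mul_comm]

lemma mul_gaussianPDFReal_zero (v : ℝ≥0) (x : ℝ) :
    v * gaussianPDFReal 0 v x = √v / √(2 * π) * exp (-x ^ 2 / (2 * v)) := by
  rcases eq_or_ne v 0 with rfl | hv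
  · simp
  have hv' : (0 : ℝ) < v := by positivity
  rw [gaussianPDFReal, sub_zero, sqrt_mul (by positivity)]
  field_simp
  rw [sq_sqrt hv'.le]

end ProbabilityTheory

open Set in
lemma ite_lt_abs_sign_mul_eq_indicator_sub_indicator {lam : ℝ} (hlam : 0 ≤ lam) (m x : ℝ) :
    (if lam < |m + x| then Real.sign (m + x) * x else 0)
      = (Ioi (lam - m)).indicator id x - (Iio (-lam - m)).indicator id x := by
  rcases lt_or_ge lam (m + x) with hpos | hle
  · rw [if_pos (by rwa [abs_of_pos (by linarith)]), sign_of_pos (by linarith),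
      indicator_of_mem (by simp only [mem_Ioi]; linarith),
      indicator_of_notMem (by simp only [mem_Iio, not_lt]; linarith)]
    simp
  rcases lt_or_ge (m + x) (-lam) with hneg | hge
  · rw [if_pos (by rw [abs_of_neg (by linarith)]; linarith), sign_of_neg (by linarith),
      indicator_of_notMem (by simp only [mem_Ioi, not_lt]; linarith),
      indicator_of_mem (by simp only [mem_Iio]; linarith)]
    simp
  · rw [if_neg (by rw [not_lt, abs_le]; constructor <;> linarith),
      indicator_of_notMem (by simp only [mem_Ioi, not_lt]; linarith),
      indicator_of_notMem (by simp only [mem_Iio, not_lt]; linarith), sub_zero]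

theorem expectation_sign_noise_indicator_general
    {Ω : Type*} [MeasurableSpace Ω] (μpr : Measure Ω)
    (σ lam μ₀ : ℝ) (hσ : 0 < σ) (hlam : 0 < lam)
    (W : Ω → ℝ)
    (hdist : Measure.map W μpr = gaussianReal 0 ⟨σ ^ 2, sq_nonneg σ⟩) :
    (∫ ω, (if lam < |μ₀ + W ω| then Real.sign (μ₀ + W ω) * W ω else 0) ∂μpr)
      = σ / Real.sqrt (2 * π) *
          (Real.exp (-(μ₀ + lam) ^ 2 / (2 * σ ^ 2)) +
           Real.exp (-(μ₀ - lam) ^ 2 / (2 * σ ^ 2))) := by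
  set v : ℝ≥0 := ⟨σ ^ 2, sq_nonneg σ⟩
  have hv : (v : ℝ) = σ ^ 2 := rfl
  have hW : AEMeasurable W μpr :=
    .of_map_ne_zero (by rw [hdist]; exact IsProbabilityMeasure.ne_zero _)
  have hid : Integrable id (gaussianReal 0 v) :=
    memLp_one_iff_integrable.mp (memLp_id_gaussianReal 1)
  have hg : AEStronglyMeasurable (fun x ↦ (Set.Ioi (lam - μ₀)).indicator id x
      - (Set.Iio (-lam - μ₀)).indicator id x) (μpr.map W) :=
    ((measurable_id.indicator measurableSet_Ioi).sub
      (measurable_id.indicator measurableSet_Iio)).aestronglyMeasurable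
  simp_rw [ite_lt_abs_sign_mul_eq_indicator_sub_indicator hlam.le μ₀]
  rw [← integral_map hW hg, hdist,
    integral_sub (hid.indicator measurableSet_Ioi) (hid.indicator measurableSet_Iio),
    integral_indicator measurableSet_Ioi, integral_indicator measurableSet_Iio]
  simp only [id]
  rw [setIntegral_Ioi_id_gaussianReal, setIntegral_Iio_id_gaussianReal,
    mul_gaussianPDFReal_zero, mul_gaussianPDFReal_zero, hv, sqrt_sq hσ.le]
  ring_nf

/-- `E[sign(Y)·W·1{|Y| > λ}] = (σ/√(2π))·[exp(−(μ₀+λ)²/(2σ²)) + exp(−(μ₀−λ)²/(2σ²))]`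
for `Y = μ₀ + W`, `W ~ N(0, σ²)`. -/
theorem expectation_sign_noise_indicator
    {Ω : Type*} [MeasurableSpace Ω] (μpr : Measure Ω) [IsProbabilityMeasure μpr]
    (σ lam μ₀ : ℝ) (hσ : 0 < σ) (hlam : 0 < lam)
    (W : Ω → ℝ) (hmeas : Measurable W)
    (hdist : Measure.map W μpr = gaussianReal 0 ⟨σ ^ 2, sq_nonneg σ⟩) :
    (∫ ω, (if lam < |μ₀ + W ω| then Real.sign (μ₀ + W ω) * W ω else 0) ∂μpr)
      = σ / Real.sqrt (2 * π) *
          (Real.exp (-(μ₀ + lam) ^ 2 / (2 * σ ^ 2)) +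
           Real.exp (-(μ₀ - lam) ^ 2 / (2 * σ ^ 2))) :=
  expectation_sign_noise_indicator_general μpr σ lam μ₀ hσ hlam W hdist
end
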